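/- The subgroup of the first Grigorchuk group G₀ generated by a and d is isomorphic to the dihedral group of order 8. -/
import Mathlib


namespace AutSG

variable {X Q : Type*}

/-- The action of a state `q` of a Mealy automaton with transition function `δ`
and output function `out` on finite words over the alphabet `X`. -/
def mAct (δ : Q → X → Q) (out : Q → X → X) : Q → List X → List X
  | _, [] => []
  | q, x :: w => out q x :: mAct δ out (δ q x) w

theorem mAct_bijective (δ : Q → X → Q) (out : Q → X → X)
    (hout : ∀ q, Function.Bijective (out q)) (q : Q) :
    Function.Bijective (mAct δ out q) := by
  have key : ∀ (l₁ : List X) (q : Q) (l₂ : List X),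
      mAct δ out q l₁ = mAct δ out q l₂ → l₁ = l₂ := by
    intro l₁
    induction l₁ with
    | nil =>
      intro q l₂ h
      cases l₂ with
      | nil => rfl
      | cons y u => exact absurd h (by simp [mAct])
    | cons x w ih =>
      intro q l₂ h
      cases l₂ with
      | nil => exact absurd h (by simp [mAct])
      | cons y u =>
        simp only [mAct, List.cons.injEq] at h
        obtain rfl : x = y := (hout q).1 h.1
        rw [ih (δ q x) u h.2]
  have key2 : ∀ (l : List X) (q : Q), ∃ m, mAct δ out q m = l := by
    intro l
    induction l with
    | nil => exact fun q => ⟨[], rfl⟩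
    | cons y u ih =>
      intro q
      obtain ⟨x, hx⟩ := (hout q).2 y
      obtain ⟨m, hm⟩ := ih (δ q x)
      exact ⟨x :: m, by simp [mAct, hx, hm]⟩
  exact ⟨fun {l₁ l₂} h => key l₁ q l₂ h, fun l => key2 l q⟩

/-- The permutation of `X*` induced by the state `q` of an invertible Mealy automaton,
as an element of `Equiv.Perm (List X)`.  We use the convention that permutations act
on the *right* via `rApp` below, so that the Lean group multiplication `g * h`
corresponds to "first `g`, then `h`", as in the usual convention for automaton groups. -/
noncomputable def genPerm (δ : Q → X → Q) (out : Q → X → X)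
    (hout : ∀ q, Function.Bijective (out q)) (q : Q) : Equiv.Perm (List X) :=
  (Equiv.ofBijective _ (mAct_bijective δ out hout q))⁻¹

/-- Right action of a permutation on words: `rApp g w` is `w^g`.
Note `rApp (g * h) w = rApp h (rApp g w)`. -/
def rApp (g : Equiv.Perm (List X)) (w : List X) : List X := g⁻¹ w

theorem rApp_genPerm (δ : Q → X → Q) (out : Q → X → X)
    (hout : ∀ q, Function.Bijective (out q)) (q : Q) (w : List X) :
    rApp (genPerm δ out hout q) w = mAct δ out q w := by
  simp [rApp, genPerm, Equiv.ofBijective]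

/-- Commutator with the convention `[x,y] = x⁻¹y⁻¹xy`. -/
def comm {G : Type*} [Group G] (x y : G) : G := x⁻¹ * y⁻¹ * x * y

/-- Conjugation with the convention `y^z = z⁻¹yz`. -/
def conj {G : Type*} [Group G] (y z : G) : G := z⁻¹ * y * z

/-- Iterated commutators: `E₀(g,h) = g`, `E_{c+1}(g,h) = [E_c(g,h), h]`. -/
def engel {G : Type*} [Group G] : ℕ → G → G → G
  | 0, g, _ => g
  | c + 1, g, h => comm (engel c g h) h

/-- `vStar v k` is the permutation `v*k` of `X*`: it maps `v ++ w` to `v ++ w^k`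
(with respect to the right action `rApp`) and fixes every word not having `v`
as a prefix. -/
def vStar [DecidableEq X] (v : List X) (k : Equiv.Perm (List X)) :
    Equiv.Perm (List X) where
  toFun w := if v <+: w then v ++ k (w.drop v.length) else w
  invFun w := if v <+: w then v ++ k.symm (w.drop v.length) else w
  left_inv w := by
    by_cases h : v <+: w
    · simp only [if_pos h, if_pos (List.prefix_append v _), List.drop_left,
        Equiv.symm_apply_apply]
      exact List.prefix_iff_eq_append.mp h
    · simp only [if_neg h]
  right_inv w := by
    by_cases h : v <+: w
    · simp only [if_pos h, if_pos (List.prefix_append v _), List.drop_left,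
        Equiv.apply_symm_apply]
      exact List.prefix_iff_eq_append.mp h
    · simp only [if_neg h]

end AutSG
namespace AutSG

/-- States of the Grigorchuk automaton: `a`, `b`, `c`, `d` and the identity state `e`. -/
inductive GrigQ | a | b | c | d | e
deriving DecidableEq

/-- Transition function of the Grigorchuk automaton (letter `1` is `0 : Fin 2`,
letter `2` is `1 : Fin 2`). -/
def grigδ : GrigQ → Fin 2 → GrigQ
  | .a, _ => .e
  | .b, 0 => .a
  | .b, _ => .c
  | .c, 0 => .a
  | .c, _ => .d
  | .d, 0 => .e
  | .d, _ => .b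
  | .e, _ => .e

/-- Output function of the Grigorchuk automaton: `a` swaps the two letters,
all other states act trivially on letters. -/
def grigOut : GrigQ → Fin 2 → Fin 2
  | .a, x => x + 1
  | _, x => x

theorem grigOut_bij : ∀ q, Function.Bijective (grigOut q) := by
  intro q; cases q <;> decide

/-- The generator `a` of the first Grigorchuk group: `(1w)^a = 2w`, `(2w)^a = 1w`. -/
noncomputable def ga : Equiv.Perm (List (Fin 2)) := genPerm grigδ grigOut grigOut_bij .a
/-- The generator `b`: `(1w)^b = 1(w^a)`, `(2w)^b = 2(w^c)`. -/
noncomputable def gb : Equiv.Perm (List (Fin 2)) := genPerm grigδ grigOut grigOut_bij .b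
/-- The generator `c`: `(1w)^c = 1(w^a)`, `(2w)^c = 2(w^d)`. -/
noncomputable def gc : Equiv.Perm (List (Fin 2)) := genPerm grigδ grigOut grigOut_bij .c
/-- The generator `d`: `(1w)^d = 1w`, `(2w)^d = 2(w^b)`. -/
noncomputable def gd : Equiv.Perm (List (Fin 2)) := genPerm grigδ grigOut grigOut_bij .d

/-- The first Grigorchuk group `G₀`, as the subgroup of the permutation group of
`{1,2}*` generated by `a`, `b`, `c`, `d`. -/
noncomputable def Grigorchuk : Subgroup (Equiv.Perm (List (Fin 2))) :=
  Subgroup.closure {ga, gb, gc, gd}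

end AutSG

namespace AutSG

/-- Shorthand for the action functions of the Grigorchuk automaton states. -/
def gf (q : GrigQ) : List (Fin 2) → List (Fin 2) := mAct grigδ grigOut q

lemma gf_nil (q : GrigQ) : gf q [] = [] := rfl

lemma gf_cons (q : GrigQ) (x : Fin 2) (w : List (Fin 2)) :
    gf q (x :: w) = grigOut q x :: gf (grigδ q x) w := rfl

lemma fin2 : ∀ x : Fin 2, x = 0 ∨ x = 1 := by decide

lemma gδa (x : Fin 2) : grigδ .a x = .e := rfl
lemma gδe (x : Fin 2) : grigδ .e x = .e := rfl
lemma gδb0 : grigδ .b 0 = .a := by decide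
lemma gδb1 : grigδ .b 1 = .c := by decide
lemma gδc0 : grigδ .c 0 = .a := by decide
lemma gδc1 : grigδ .c 1 = .d := by decide
lemma gδd0 : grigδ .d 0 = .e := by decide
lemma gδd1 : grigδ .d 1 = .b := by decide
lemma gOa0 : grigOut .a 0 = 1 := by decide
lemma gOa1 : grigOut .a 1 = 0 := by decide
lemma gOb (x : Fin 2) : grigOut .b x = x := rfl
lemma gOc (x : Fin 2) : grigOut .c x = x := rfl
lemma gOd (x : Fin 2) : grigOut .d x = x := rfl
lemma gOe (x : Fin 2) : grigOut .e x = x := rfl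

lemma gf_e (w : List (Fin 2)) : gf .e w = w := by
  induction w with
  | nil => rfl
  | cons x w ih => rw [gf_cons, gδe, gOe, ih]

lemma gf_a_a (w : List (Fin 2)) : gf .a (gf .a w) = w := by
  cases w with
  | nil => rfl
  | cons x w =>
    rcases fin2 x with rfl | rfl <;>
      simp only [gf_cons, gδa, gOa0, gOa1, gf_e]

lemma gf_bcd (w : List (Fin 2)) :
    gf .b (gf .b w) = w ∧ gf .c (gf .c w) = w ∧ gf .d (gf .d w) = w := by
  induction w with
  | nil => exact ⟨rfl, rfl, rfl⟩
  | cons x w ih =>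
    rcases fin2 x with rfl | rfl <;>
      simp only [gf_cons, gδb0, gδb1, gδc0, gδc1, gδd0, gδd1, gOb, gOc, gOd,
        gf_e, gf_a_a, ih.1, ih.2.1, ih.2.2, and_self, true_and]

lemma ga_apply (w : List (Fin 2)) : ga w = gf .a w := by
  show (Equiv.ofBijective _ (mAct_bijective grigδ grigOut grigOut_bij .a))⁻¹ w = _
  rw [Equiv.Perm.inv_def, Equiv.symm_apply_eq]
  exact (gf_a_a w).symm

lemma gd_apply (w : List (Fin 2)) : gd w = gf .d w := by
  show (Equiv.ofBijective _ (mAct_bijective grigδ grigOut grigOut_bij .d))⁻¹ w = _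
  rw [Equiv.Perm.inv_def, Equiv.symm_apply_eq]
  exact ((gf_bcd w).2.2).symm

lemma ga_sq : ga * ga = 1 := by
  ext w
  rw [Equiv.Perm.mul_apply, ga_apply, ga_apply, gf_a_a, Equiv.Perm.one_apply]

lemma gd_sq : gd * gd = 1 := by
  ext w
  rw [Equiv.Perm.mul_apply, gd_apply, gd_apply, (gf_bcd w).2.2, Equiv.Perm.one_apply]

/-- The composite action of `a * d` (Lean's permutation product applied as a function). -/
def gs (w : List (Fin 2)) : List (Fin 2) := gf .a (gf .d w)

lemma gad_apply (w : List (Fin 2)) : (ga * gd) w = gs w := by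
  rw [Equiv.Perm.mul_apply, ga_apply, gd_apply]; rfl

lemma gs_gs (x : Fin 2) (w : List (Fin 2)) : gs (gs (x :: w)) = x :: gf .b w := by
  rcases fin2 x with rfl | rfl <;>
    simp only [gs, gf_cons, gδa, gδd0, gδd1, gOa0, gOa1, gOd, gf_e]

lemma gs4 (w : List (Fin 2)) : gs (gs (gs (gs w))) = w := by
  cases w with
  | nil => rfl
  | cons x w => rw [gs_gs, gs_gs, (gf_bcd w).1]

lemma gad_pow4 : (ga * gd) ^ 4 = 1 := by
  ext w
  have : ∀ u, ((ga * gd) ^ 4) u = gs (gs (gs (gs u))) := by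
    intro u
    have hpt : ∀ v, ga (gd v) = gs v := fun v => by rw [ga_apply, gd_apply]; rfl
    show ((ga*gd) * ((ga*gd) * ((ga*gd) * ((ga*gd) * 1)))) u = _
    simp only [mul_one, Equiv.Perm.mul_apply, hpt]
  rw [this, gs4, Equiv.Perm.one_apply]

lemma gad_ne_pows :
    (ga * gd) ≠ 1 ∧ (ga * gd) ^ 2 ≠ 1 := by
  constructor
  · intro h
    have := DFunLike.congr_fun h [0, 0, 0]
    rw [gad_apply, Equiv.Perm.one_apply] at this
    exact absurd this (by decide)
  · intro h
    have := DFunLike.congr_fun h [0, 0, 0]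
    rw [pow_two, Equiv.Perm.mul_apply, gad_apply, gad_apply, Equiv.Perm.one_apply] at this
    exact absurd this (by decide)

lemma orderOf_gad : orderOf (ga * gd) = 4 := by
  have hdvd : orderOf (ga * gd) ∣ 4 := orderOf_dvd_of_pow_eq_one gad_pow4
  have h1 : orderOf (ga * gd) ≠ 1 := fun h => gad_ne_pows.1 (orderOf_eq_one_iff.mp h)
  have h2 : orderOf (ga * gd) ≠ 2 := fun h =>
    gad_ne_pows.2 (by have h' := pow_orderOf_eq_one (ga * gd); rwa [h] at h')
  have hle : orderOf (ga * gd) ≤ 4 := Nat.le_of_dvd (by norm_num) hdvd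
  interval_cases h : orderOf (ga * gd) <;> omega

/-- The element `a*d`, which has order 4. -/
noncomputable def gT : Equiv.Perm (List (Fin 2)) := ga * gd

lemma orderOf_gT : orderOf gT = 4 := orderOf_gad

lemma gT_apply (w : List (Fin 2)) : gT w = gs w := gad_apply w

lemma pz_add (i j : ZMod 4) : gT ^ (i + j).val = gT ^ i.val * gT ^ j.val := by
  rw [← pow_add, ZMod.val_add]
  have h := pow_mod_orderOf gT (i.val + j.val)
  rw [orderOf_gT] at h
  exact h

lemma pz_neg (i : ZMod 4) : gT ^ (-i).val = (gT ^ i.val)⁻¹ := by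
  apply eq_inv_of_mul_eq_one_right
  rw [← pz_add, add_neg_cancel, ZMod.val_zero, pow_zero]

lemma ga_inv : ga⁻¹ = ga := inv_eq_of_mul_eq_one_right ga_sq
lemma gd_inv : gd⁻¹ = gd := inv_eq_of_mul_eq_one_right gd_sq

lemma ga_comm_pow (n : ℕ) : gT ^ n * ga = ga * (gT ^ n)⁻¹ := by
  have h0 : SemiconjBy ga gT⁻¹ gT := by
    show ga * gT⁻¹ = gT * ga
    rw [gT, mul_inv_rev, ga_inv, gd_inv, ← mul_assoc, mul_assoc]
  rw [← inv_pow]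
  exact (h0.pow_right n).symm

/-- The isomorphism from the dihedral group of order 8 onto `⟨a, d⟩`. -/
noncomputable def phi : DihedralGroup 4 →* Equiv.Perm (List (Fin 2)) where
  toFun g := match g with
    | .r i => gT ^ i.val
    | .sr i => ga * gT ^ i.val
  map_one' := by
    show gT ^ (0 : ZMod 4).val = 1
    rw [ZMod.val_zero, pow_zero]
  map_mul' := by
    rintro (i | i) (j | j)
    · simp only [DihedralGroup.r_mul_r]
      exact pz_add i j
    · simp only [DihedralGroup.r_mul_sr]
      show ga * gT ^ (j - i).val = gT ^ i.val * (ga * gT ^ j.val)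
      rw [← mul_assoc, ga_comm_pow, ← pz_neg, mul_assoc, ← pz_add, neg_add_eq_sub]
    · simp only [DihedralGroup.sr_mul_r]
      show ga * gT ^ (i + j).val = ga * gT ^ i.val * gT ^ j.val
      rw [pz_add, mul_assoc]
    · simp only [DihedralGroup.sr_mul_sr]
      show gT ^ (j - i).val = ga * gT ^ i.val * (ga * gT ^ j.val)
      rw [mul_assoc, ← mul_assoc (gT ^ i.val), ga_comm_pow, ← pz_neg, ← mul_assoc,
        ← mul_assoc, ga_sq, one_mul, ← pz_add, neg_add_eq_sub]

lemma phi_r (i : ZMod 4) : phi (.r i) = gT ^ i.val := rfl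
lemma phi_sr (i : ZMod 4) : phi (.sr i) = ga * gT ^ i.val := rfl

lemma phi_injective : Function.Injective phi := by
  rw [injective_iff_map_eq_one]
  rintro (i | i) hg
  · rw [phi_r] at hg
    have h4 : orderOf gT ∣ i.val := orderOf_dvd_of_pow_eq_one hg
    rw [orderOf_gT] at h4
    have h0 : i.val = 0 := Nat.eq_zero_of_dvd_of_lt h4 (ZMod.val_lt i)
    rw [DihedralGroup.one_def]
    congr 1
    exact (ZMod.val_eq_zero i).mp h0
  · exfalso
    rw [phi_sr] at hg
    have hpow : ∀ (n : ℕ) (w : List (Fin 2)), (gT ^ n) w = gs^[n] w := by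
      intro n
      induction n with
      | zero => intro w; simp
      | succ n ih =>
        intro w
        rw [pow_succ', Equiv.Perm.mul_apply, ih, gT_apply, Function.iterate_succ_apply' gs n w]
    fin_cases i <;>
      [ (have h := DFunLike.congr_fun hg [0, 0, 0]);
        (have h := DFunLike.congr_fun hg [1, 0, 0]);
        (have h := DFunLike.congr_fun hg [0, 0, 0]);
        (have h := DFunLike.congr_fun hg [0, 0, 0])] <;>
    · simp only [Equiv.Perm.mul_apply, Equiv.Perm.one_apply] at h
      rw [hpow, ga_apply] at h
      exact absurd h (by decide)

lemma phi_range : phi.range = Subgroup.closure {ga, gd} := by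
  apply le_antisymm
  · rintro x ⟨g, rfl⟩
    have hga : ga ∈ Subgroup.closure {ga, gd} :=
      Subgroup.subset_closure (by simp)
    have hgT : gT ∈ Subgroup.closure {ga, gd} :=
      mul_mem hga (Subgroup.subset_closure (by simp))
    rcases g with i | i
    · exact pow_mem hgT _
    · exact mul_mem hga (pow_mem hgT _)
  · rw [Subgroup.closure_le]
    rintro x (rfl | rfl)
    · exact ⟨.sr 0, by rw [phi_sr]; simp [ZMod.val_zero]⟩
    · refine ⟨.sr 1, ?_⟩
      rw [phi_sr]
      show ga * gT ^ (1 : ZMod 4).val = gd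
      have : (1 : ZMod 4).val = 1 := rfl
      rw [this, pow_one, gT, ← mul_assoc, ga_sq, one_mul]

end AutSG

open AutSG in
/-- The subgroup of the first Grigorchuk group generated by `a` and `d` is
isomorphic to the dihedral group of order 8. -/
theorem grigorchuk_a_d_dihedral :
    Nonempty ((Subgroup.closure {ga, gd} : Subgroup (Equiv.Perm (List (Fin 2)))) ≃*
      DihedralGroup 4) :=
  ⟨(MulEquiv.subgroupCongr phi_range.symm).trans (MonoidHom.ofInjective phi_injective).symm⟩
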